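/- Let N ≥ 1, λ > 0, let G : (0,1)^N → ℝ, and let l(q,q₀) = q·log(q/q₀) + (1−q)·log((1−q)/(1−q₀)). Let Q^t, Q^{t+1} ∈ (0,1)^N and suppose that for each i ∈ {1,…,N}, the coordinate q_i^{t+1} minimizes over q ∈ (0,1) the function q ↦ G(q_1^{t+1},…,q_{i−1}^{t+1}, q, q_{i+1}^t,…,q_N^t) + λ·l(q, q_i^t). Then G(Q^{t+1}) + λ·Σ_{i=1}^N l(q_i^{t+1}, q_i^t) ≤ G(Q^t), and consequently, by 1-strong convexity of l(·,q₀), the sufficient decrease inequality G(Q^{t+1}) + (λ/2)·‖Q^{t+1} − Q^t‖² ≤ G(Q^t) holds, where ‖·‖ is the Euclidean norm on ℝ^N. -/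

import Mathlib

/-!
Comparing each coordinate update with the choice `q = q_i^t`, for which the penalty vanishes,
and telescoping over the `N` intermediate points of the sweep gives the first inequality.
For the second, `l` is the Bregman divergence of the negative binary entropy `-H`, whose second
derivative `1 / (x (1 - x))` is at least `1` on `(0, 1)`: so `-H(x) - x² / 2` is convex, and its
tangent-line inequality at `q₀` is exactly `(q - q₀)² / 2 ≤ l(q, q₀)`.
-/

open Real Set

noncomputable def bernoulliKL (a b : ℝ) : ℝ :=
  a * log (a / b) + (1 - a) * log ((1 - a) / (1 - b))

@[simp]
lemma bernoulliKL_self (a : ℝ) : bernoulliKL a a = 0 := by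
  simp [bernoulliKL]

lemma ConvexOn.add_deriv_mul_sub_le {S : Set ℝ} {f : ℝ → ℝ} {f' x y : ℝ} (hf : ConvexOn ℝ S f)
    (hx : x ∈ S) (hy : y ∈ S) (hfx : HasDerivAt f f' x) : f x + f' * (y - x) ≤ f y := by
  rcases lt_trichotomy y x with hyx | rfl | hxy
  · have := hf.slope_le_of_hasDerivAt hy hx hyx hfx
    rw [slope_def_field, div_le_iff₀ (sub_pos.2 hyx)] at this
    linarith
  · simp
  · have := hf.le_slope_of_hasDerivAt hx hy hxy hfx
    rw [slope_def_field, le_div_iff₀ (sub_pos.2 hxy)] at this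
    linarith

lemma hasDerivAt_neg_binEntropy_sub_sq {x : ℝ} (hx : x ∈ Ioo (0 : ℝ) 1) :
    HasDerivAt (fun x => -binEntropy x - x ^ 2 / 2) (log x - log (1 - x) - x) x := by
  refine ((hasDerivAt_binEntropy hx.1.ne' hx.2.ne).fun_neg.fun_sub
    ((hasDerivAt_pow 2 x).div_const 2)).congr_deriv ?_
  push_cast
  ring

lemma hasDerivAt_log_sub_log_one_sub {x : ℝ} (hx : x ∈ Ioo (0 : ℝ) 1) :
    HasDerivAt (fun x => log x - log (1 - x)) (x⁻¹ + (1 - x)⁻¹) x := by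
  have h1 := ((hasDerivAt_id x).const_sub 1).log (sub_ne_zero.2 hx.2.ne')
  refine ((hasDerivAt_log hx.1.ne').fun_sub h1).congr_deriv ?_
  simp only [id]
  ring

lemma convexOn_neg_binEntropy_sub_sq :
    ConvexOn ℝ (Ioo 0 1) fun x => -binEntropy x - x ^ 2 / 2 := by
  refine convexOn_of_hasDerivWithinAt2_nonneg (convex_Ioo 0 1)
    (f' := fun x => log x - log (1 - x) - x) (f'' := fun x => x⁻¹ + (1 - x)⁻¹ - 1)
    (by fun_prop) ?_ ?_ ?_ <;> rw [interior_Ioo] <;> intro x hx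
  · exact (hasDerivAt_neg_binEntropy_sub_sq hx).hasDerivWithinAt
  · exact ((hasDerivAt_log_sub_log_one_sub hx).sub (hasDerivAt_id x)).hasDerivWithinAt
  · have : 1 ≤ x⁻¹ := one_le_inv₀ hx.1 |>.2 hx.2.le
    have : 0 ≤ (1 - x)⁻¹ := inv_nonneg.2 (sub_nonneg.2 hx.2.le)
    linarith

lemma sq_sub_div_two_le_bernoulliKL {a b : ℝ} (ha : a ∈ Ioo (0 : ℝ) 1) (hb : b ∈ Ioo (0 : ℝ) 1) :
    (a - b) ^ 2 / 2 ≤ bernoulliKL a b := by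
  have := convexOn_neg_binEntropy_sub_sq.add_deriv_mul_sub_le hb ha
    (hasDerivAt_neg_binEntropy_sub_sq hb)
  rw [bernoulliKL, log_div ha.1.ne' hb.1.ne',
    log_div (sub_ne_zero.2 ha.2.ne') (sub_ne_zero.2 hb.2.ne')]
  simp only [binEntropy, log_inv] at this
  linear_combination this

lemma add_sum_le_of_succ_add_le {α : Type*} [AddCommMonoid α] [PartialOrder α]
    [IsOrderedAddMonoid α] {n : ℕ} (g : ℕ → α) (d : Fin n → α)
    (h : ∀ i : Fin n, g (i + 1) + d i ≤ g i) : g n + ∑ i, d i ≤ g 0 := by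
  induction n with
  | zero => simp
  | succ n ih =>
    rw [Fin.sum_univ_castSucc, ← add_assoc, add_right_comm]
    calc g (n + 1) + d (Fin.last n) + ∑ i : Fin n, d i.castSucc
        ≤ g n + ∑ i : Fin n, d i.castSucc := by
          gcongr
          exact h (Fin.last n)
      _ ≤ g 0 := ih _ fun i => h i.castSucc

def coordSweep {α : Type*} {n : ℕ} (x y : Fin n → α) (k : ℕ) : Fin n → α :=
  fun j => if (j : ℕ) < k then y j else x j

section coordSweep

variable {α : Type*} {n : ℕ} (x y : Fin n → α)

@[simp]
lemma coordSweep_zero : coordSweep x y 0 = x :=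
  funext fun j => by simp [coordSweep]

@[simp]
lemma coordSweep_self : coordSweep x y n = y :=
  funext fun j => by simp [coordSweep]

lemma coordSweep_eq_ite (i : Fin n) :
    coordSweep x y i = fun j => if j < i then y j else if j = i then x i else x j := by
  funext j
  rcases lt_trichotomy j i with h | rfl | h
  · simp [coordSweep, h]
  · simp [coordSweep]
  · simp [coordSweep, h.not_gt, h.ne', Fin.lt_def.1 h |>.not_gt]

lemma coordSweep_succ_eq_ite (i : Fin n) :
    coordSweep x y (i + 1) = fun j => if j < i then y j else if j = i then y i else x j := by
  funext j
  rcases lt_trichotomy j i with h | rfl | h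
  · simp [coordSweep, h, Nat.lt_succ_of_lt (Fin.lt_def.1 h)]
  · simp [coordSweep]
  · simp [coordSweep, h.not_gt, h.ne', Fin.lt_def.1 h |>.not_ge]

end coordSweep

theorem proximal_sufficient_decrease_general
    (N : ℕ) (lam : ℝ) (hlam : 0 < lam)
    (G : (Fin N → ℝ) → ℝ)
    (l : ℝ → ℝ → ℝ)
    (hl : ∀ q q0 : ℝ, l q q0 =
      q * Real.log (q / q0) + (1 - q) * Real.log ((1 - q) / (1 - q0)))
    (Qt Qt1 : Fin N → ℝ)
    (hQt : ∀ i, Qt i ∈ Set.Ioo (0 : ℝ) 1)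
    (hQt1 : ∀ i, Qt1 i ∈ Set.Ioo (0 : ℝ) 1)
    (hmin : ∀ i : Fin N, ∀ q ∈ Set.Ioo (0 : ℝ) 1,
      G (fun j => if j < i then Qt1 j else if j = i then Qt1 i else Qt j) +
          lam * l (Qt1 i) (Qt i)
        ≤ G (fun j => if j < i then Qt1 j else if j = i then q else Qt j) +
          lam * l q (Qt i)) :
    G Qt1 + lam * ∑ i, l (Qt1 i) (Qt i) ≤ G Qt ∧
    G Qt1 + (lam / 2) * ∑ i, (Qt1 i - Qt i) ^ 2 ≤ G Qt := by
  obtain rfl : l = bernoulliKL := funext fun q => funext (hl q)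
  have hdescent : G Qt1 + lam * ∑ i, bernoulliKL (Qt1 i) (Qt i) ≤ G Qt := by
    have hstep (i : Fin N) : G (coordSweep Qt Qt1 (i + 1)) + lam * bernoulliKL (Qt1 i) (Qt i) ≤
        G (coordSweep Qt Qt1 i) := by
      simpa [coordSweep_eq_ite, coordSweep_succ_eq_ite] using hmin i (Qt i) (hQt i)
    simpa [Finset.mul_sum] using
      add_sum_le_of_succ_add_le (fun k => G (coordSweep Qt Qt1 k)) _ hstep
  refine ⟨hdescent, le_trans ?_ hdescent⟩
  rw [div_mul_eq_mul_div, mul_div_assoc, Finset.sum_div]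
  gcongr with i
  exact sq_sub_div_two_le_bernoulliKL (hQt1 i) (hQt i)

/-- Sufficient decrease of the proximal alternate minimization.
If each coordinate `q_i^{t+1}` minimizes over `q ∈ (0,1)` the map
`q ↦ G(q_1^{t+1},…,q_{i−1}^{t+1}, q, q_{i+1}^t,…,q_N^t) + λ·l(q, q_i^t)`,
where `l` is the Bernoulli KL penalty, then
`G(Q^{t+1}) + λ·Σ_i l(q_i^{t+1}, q_i^t) ≤ G(Q^t)` and, by 1-strong convexity
of `l(·,q₀)`, `G(Q^{t+1}) + (λ/2)·‖Q^{t+1} − Q^t‖² ≤ G(Q^t)` (Euclidean norm). -/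
theorem proximal_sufficient_decrease
    (N : ℕ) (hN : 1 ≤ N) (lam : ℝ) (hlam : 0 < lam)
    (G : (Fin N → ℝ) → ℝ)
    (l : ℝ → ℝ → ℝ)
    (hl : ∀ q q0 : ℝ, l q q0 =
      q * Real.log (q / q0) + (1 - q) * Real.log ((1 - q) / (1 - q0)))
    (Qt Qt1 : Fin N → ℝ)
    (hQt : ∀ i, Qt i ∈ Set.Ioo (0 : ℝ) 1)
    (hQt1 : ∀ i, Qt1 i ∈ Set.Ioo (0 : ℝ) 1)
    (hmin : ∀ i : Fin N, ∀ q ∈ Set.Ioo (0 : ℝ) 1,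
      G (fun j => if j < i then Qt1 j else if j = i then Qt1 i else Qt j) +
          lam * l (Qt1 i) (Qt i)
        ≤ G (fun j => if j < i then Qt1 j else if j = i then q else Qt j) +
          lam * l q (Qt i)) :
    G Qt1 + lam * ∑ i, l (Qt1 i) (Qt i) ≤ G Qt ∧
    G Qt1 + (lam / 2) * ∑ i, (Qt1 i - Qt i) ^ 2 ≤ G Qt :=
  proximal_sufficient_decrease_general N lam hlam G l hl Qt Qt1 hQt hQt1 hmin
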